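/- arXiv:1712.07905 — 3 statements merged into one kernel-verified Lean document; each statement's English description precedes it below -/
import Mathlib

section
/- For any positive integers m, s, the parity of G_{2^m·s} equals the parity of G_s; moreover, if G_s is even then G_{2^m·s}/2 ≡ 1 (mod 2). -/
def G (A : ℤ) : ℕ → ℤ
  | 0 => 2
  | 1 => A
  | n + 2 => A * G A (n + 1) - G A n

lemma G_add (A : ℤ) : ∀ n m, n ≤ m → G A (m + n) = G A m * G A n - G A (m - n) := by
  intro n
  induction n using Nat.strong_induction_on with
  | _ n ih =>
    match n with
    | 0 => intro m _; simp [G]; ring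
    | 1 =>
      intro m hm
      obtain ⟨k, rfl⟩ := Nat.exists_eq_add_of_le hm
      rw [show 1 + k + 1 = k + 2 from by omega, show 1 + k = k + 1 from by omega,
        show k + 1 - 1 = k from by omega]
      show A * G A (k + 1) - G A k = _
      simp [G]; ring
    | n + 2 =>
      intro m hm
      obtain ⟨k, rfl⟩ := Nat.exists_eq_add_of_le hm
      have h1 := ih (n + 1) (by omega) (n + 2 + k) (by omega)
      have h2 := ih n (by omega) (n + 2 + k) (by omega)
      have e1 : n + 2 + k - (n + 1) = k + 1 := by omega
      have e2 : n + 2 + k - n = k + 2 := by omega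
      have e3 : n + 2 + k - (n + 2) = k := by omega
      rw [e1] at h1; rw [e2] at h2; rw [e3]
      have r1 : G A (n + 2 + k + (n + 2)) =
          A * G A (n + 2 + k + (n + 1)) - G A (n + 2 + k + n) := by
        have : n + 2 + k + (n + 2) = (n + 2 + k + n) + 2 := by omega
        rw [this]
        show A * G A (n + 2 + k + n + 1) - G A (n + 2 + k + n) = _
        congr 2 <;> omega
      have r2 : G A (n + 2) = A * G A (n + 1) - G A n := rfl
      have r3 : G A (k + 2) = A * G A (k + 1) - G A k := rfl
      rw [r1, h1, h2, r2]
      have : G A k = A * G A (k + 1) - G A (k + 2) := by rw [r3]; ring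
      rw [this]; ring

lemma G_double (A : ℤ) (n : ℕ) : G A (2 * n) = G A n ^ 2 - 2 := by
  have := G_add A n n le_rfl
  simp only [Nat.sub_self] at this
  rw [two_mul, this]
  simp [G]; ring

lemma key (A : ℤ) (n : ℕ) :
    ((2 : ℤ) ∣ G A (2 * n) ↔ (2 : ℤ) ∣ G A n) ∧
      (Even (G A n) → G A (2 * n) / 2 ≡ 1 [ZMOD 2]) := by
  rw [G_double]
  rcases Int.even_or_odd (G A n) with ⟨k, hk⟩ | ⟨k, hk⟩ <;> rw [hk]
  · refine ⟨⟨fun _ => ⟨k, by omega⟩, fun _ => ⟨2 * k ^ 2 - 1, by ring⟩⟩, fun _ => ?_⟩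
    rw [show (k + k) ^ 2 - 2 = 2 * (2 * k ^ 2 - 1) from by ring,
      Int.mul_ediv_cancel_left _ two_ne_zero]
    show (2 * k ^ 2 - 1) % 2 = 1 % 2
    generalize k ^ 2 = K
    omega
  · constructor
    · constructor
      · intro ⟨c, hc⟩
        exfalso
        rw [show (2 * k + 1) ^ 2 - 2 = 2 * (2 * k ^ 2 + 2 * k) - 1 from by ring] at hc
        generalize 2 * k ^ 2 + 2 * k = K at hc
        omega
      · intro ⟨c, hc⟩
        exfalso
        omega
    · intro ⟨c, hc⟩
      exfalso
      omega

theorem G_pow_two_mul_parity (A : ℤ) (m s : ℕ) (hm : 1 ≤ m) (hs : 1 ≤ s) :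
    ((2 : ℤ) ∣ G A (2 ^ m * s) ↔ (2 : ℤ) ∣ G A s) ∧
      (Even (G A s) → G A (2 ^ m * s) / 2 ≡ 1 [ZMOD 2]) := by
  induction m with
  | zero => omega
  | succ m ih =>
    rcases Nat.eq_zero_or_pos m with rfl | hm'
    · simpa using key A s
    · obtain ⟨ih1, ih2⟩ := ih hm'
      have heq : 2 ^ (m + 1) * s = 2 * (2 ^ m * s) := by ring
      rw [heq]
      obtain ⟨k1, k2⟩ := key A (2 ^ m * s)
      refine ⟨by rw [k1, ih1], fun h => ?_⟩
      apply k2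
      obtain ⟨c, hc⟩ := h
      obtain ⟨d, hd⟩ := ih1.mpr ⟨c, by omega⟩
      exact ⟨d, by omega⟩
end

section
/- Let N ≥ 1 and C = [[1,p],[q,1+p·q]]. Then Cⁿ ≡ I (mod N) for some n ≥ 1 if and only if (taking G, H the Lucas sequences with A = p·q+2, and assuming G_n even): p·H_n ≡ 0 (mod N), q·H_n ≡ 0 (mod N), (p·q·H_n)/2 ≡ 0 (mod N), and G_n/2 ≡ 1 (mod N). In particular these four congruences hold iff Cⁿ reduces to the identity matrix over Z/NZ. -/
def catMatrix (p q : ℤ) : Matrix (Fin 2) (Fin 2) ℤ := !![1, p; q, 1 + p * q]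

def H (A : ℤ) : ℕ → ℤ
  | 0 => 0
  | 1 => 1
  | n + 2 => A * H A (n + 1) - H A n

lemma Gval (A : ℤ) : ∀ k, G A k = 2 * H A (k + 1) - A * H A k
  | 0 => by simp [G, H]
  | 1 => by simp [G, H]; ring
  | (k + 2) => by
      have e1 : G A (k + 2) = A * G A (k + 1) - G A k := rfl
      have e2 : H A (k + 3) = A * H A (k + 2) - H A (k + 1) := rfl
      have e3 : H A (k + 2) = A * H A (k + 1) - H A k := rfl
      rw [e1, Gval A (k + 1), Gval A k, e2, e3]; ring

lemma Hinv (A : ℤ) : ∀ k, H A (k + 1) ^ 2 - A * H A (k + 1) * H A k + H A k ^ 2 = 1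
  | 0 => by simp [H]
  | (k + 1) => by
      have e2 : H A (k + 2) = A * H A (k + 1) - H A k := rfl
      have := Hinv A k
      rw [e2]; nlinarith [this]

lemma catPow (p q : ℤ) : ∀ k, (catMatrix p q) ^ k =
    !![H (p*q+2) (k+1) - (1 + p*q) * H (p*q+2) k, p * H (p*q+2) k;
       q * H (p*q+2) k, H (p*q+2) (k+1) - H (p*q+2) k]
  | 0 => by
      simp [H, Matrix.one_fin_two]
  | (k + 1) => by
      rw [pow_succ, catPow p q k, catMatrix, Matrix.mul_fin_two]
      have e2 : H (p*q+2) (k + 2) = (p*q+2) * H (p*q+2) (k + 1) - H (p*q+2) k := rfl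
      rw [e2]; congr 1 <;> ring

/-- The key arithmetic lemma: halving the congruence. -/
lemma key_s15 (p q N u v h : ℤ) (hh : p * q * u = 2 * h)
    (h1 : N ∣ p * u) (h2 : N ∣ q * u)
    (h3 : N ∣ v - u - 1)
    (hinv : v ^ 2 - (p*q+2) * u * v + u ^ 2 = 1) : N ∣ h := by
  rcases Int.even_or_odd p with ⟨p', rfl⟩ | hpodd
  · have : h = p' * (q * u) := by linarith
    rw [this]; exact Dvd.dvd.mul_left h2 p'
  rcases Int.even_or_odd q with ⟨q', rfl⟩ | hqodd
  · have : h = q' * (p * u) := by linarith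
    rw [this]; exact Dvd.dvd.mul_left h1 q'
  -- p, q odd; then u is even, v is odd
  obtain ⟨a, rfl⟩ := hpodd
  obtain ⟨b, rfl⟩ := hqodd
  have hu : Even u := by
    rcases Int.even_or_odd u with he | ⟨c, rfl⟩
    · exact he
    · exfalso
      have : 2 * h = 2 * (4*a*b*c + 2*a*b + 2*a*c + 2*b*c + a + b + c) + 1 := by
        rw [← hh]; ring
      omega
  have hv : Odd v := by
    obtain ⟨u', rfl⟩ := hu
    rcases Int.even_or_odd v with ⟨v', rfl⟩ | hv
    · exfalso
      set K := v' ^ 2 - ((2*a+1)*(2*b+1)+2) * u' * v' + u' ^ 2 with hK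
      have h4 : (1 : ℤ) = 4 * K := by rw [← hinv, hK]; ring
      omega
    · exact hv
  obtain ⟨t, ht⟩ := h3
  have hvu : v - u = N * t + 1 := by linarith
  have hpquv : (2*a+1) * (2*b+1) * (u * v) = (N * t) * (N * t + 2) := by
    linear_combination (-1 : ℤ) * hinv + (v - u + N*t + 1) * hvu
  have h2hv : 2 * (h * v) = (N * t) * (N * t + 2) := by
    rw [← hpquv]; linear_combination (-v) * hh
  have hNt : Even (N * t) := by
    rcases Int.even_or_odd (N * t) with he | ⟨s, hs⟩
    · exact he
    · exfalso
      have : 2 * (h * v) = 2 * (2*s*s + 4*s + 1) + 1 := by rw [h2hv, hs]; ring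
      omega
  obtain ⟨s, hs⟩ := hNt
  have h2x : 2 * (v * h) = 2 * (N * (s * t + t)) := by
    linear_combination h2hv + (N * t) * hs
  have hvh : N ∣ v * h := ⟨s * t + t, mul_left_cancel₀ two_ne_zero h2x⟩
  have h2h : N ∣ 2 * h := by
    have := h1.mul_left (2*b+1)
    rwa [show (2*b+1) * ((2*a+1) * u) = 2 * h by rw [← hh]; ring] at this
  obtain ⟨w, hw⟩ := hv
  have : h = (-w) * (2 * h) + v * h := by rw [hw]; ring
  rw [this]
  exact dvd_add (h2h.mul_left _) hvh

theorem catMatrix_pow_eq_one_iff (p q N : ℕ) (hp : 0 < p) (hq : 0 < q) (hN : 0 < N)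
    (n : ℕ) (hn : 1 ≤ n) (heven : Even (G ((p : ℤ) * q + 2) n)) :
    ((catMatrix p q).map (fun x : ℤ => (x : ZMod N))) ^ n = 1 ↔
      ((N : ℤ) ∣ (p : ℤ) * H ((p : ℤ) * q + 2) n ∧
       (N : ℤ) ∣ (q : ℤ) * H ((p : ℤ) * q + 2) n ∧
       (N : ℤ) ∣ ((p : ℤ) * q * H ((p : ℤ) * q + 2) n) / 2 ∧
       G ((p : ℤ) * q + 2) n / 2 ≡ 1 [ZMOD (N : ℤ)]) := by
  set u := H ((p : ℤ) * q + 2) n with hu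
  set v := H ((p : ℤ) * q + 2) (n + 1) with hv
  obtain ⟨g, hg⟩ := heven
  have hGv := Gval ((p : ℤ) * q + 2) n
  have hh : (p : ℤ) * q * u = 2 * (v - u - g) := by
    rw [← hu, ← hv] at hGv
    linear_combination hGv - hg
  set h := v - u - g with hdefh
  -- simplify the divisions
  have hdiv1 : ((p : ℤ) * q * u) / 2 = h := by
    rw [hh]; exact Int.mul_ediv_cancel_left _ two_ne_zero
  have hdiv2 : G ((p : ℤ) * q + 2) n / 2 = g := by
    rw [hg, show g + g = 2 * g by ring]
    exact Int.mul_ediv_cancel_left _ two_ne_zero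
  rw [hdiv1, hdiv2]
  -- the matrix side
  have hmap : ((catMatrix p q).map (fun x : ℤ => (x : ZMod N))) ^ n
      = ((catMatrix p q) ^ n).map (fun x : ℤ => (x : ZMod N)) := by
    have : (fun x : ℤ => (x : ZMod N)) = ⇑(Int.castRingHom (ZMod N)) := rfl
    rw [this, ← RingHom.mapMatrix_apply, ← RingHom.mapMatrix_apply, map_pow]
  rw [hmap, catPow, ← hu, ← hv]
  have hone : (1 : Matrix (Fin 2) (Fin 2) (ZMod N)) = !![1, 0; 0, 1] :=
    Matrix.one_fin_two
  constructor
  · intro he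
    rw [hone] at he
    have h11 : ((v - (1 + (p:ℤ)*q) * u : ℤ) : ZMod N) = ((1 : ℤ) : ZMod N) := by
      have := congrFun (congrFun he 0) 0
      simpa [Matrix.map_apply] using this
    have h12 : (((p:ℤ) * u : ℤ) : ZMod N) = ((0 : ℤ) : ZMod N) := by
      have := congrFun (congrFun he 0) 1
      simpa [Matrix.map_apply] using this
    have h21 : (((q:ℤ) * u : ℤ) : ZMod N) = ((0 : ℤ) : ZMod N) := by
      have := congrFun (congrFun he 1) 0
      simpa [Matrix.map_apply] using this
    have h22 : ((v - u : ℤ) : ZMod N) = ((1 : ℤ) : ZMod N) := by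
      have := congrFun (congrFun he 1) 1
      simpa [Matrix.map_apply] using this
    rw [ZMod.intCast_eq_intCast_iff, Int.modEq_iff_dvd] at h11 h12 h21 h22
    simp only [zero_sub, dvd_neg] at h12 h21
    have d22 : (N : ℤ) ∣ v - u - 1 := by
      have := dvd_neg.mpr h22
      rwa [show -((1:ℤ) - (v - u)) = v - u - 1 by ring] at this
    have hkey : (N : ℤ) ∣ h :=
      key_s15 (p:ℤ) (q:ℤ) (N:ℤ) u v h hh h12 h21 d22 (by
        have := Hinv ((p:ℤ)*q+2) n
        rw [← hu, ← hv] at this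
        linear_combination this)
    refine ⟨h12, h21, hkey, ?_⟩
    rw [Int.modEq_iff_dvd]
    have : (1:ℤ) - g = -((v - u - 1) - h) := by rw [hdefh]; ring
    rw [this, dvd_neg]
    exact dvd_sub d22 hkey
  · rintro ⟨h12, h21, hkey, hmod⟩
    have hg1 : (N : ℤ) ∣ g - 1 := by
      rw [Int.modEq_iff_dvd] at hmod
      have := dvd_neg.mpr hmod
      rwa [show -((1:ℤ) - g) = g - 1 by ring] at this
    have d22 : (N : ℤ) ∣ v - u - 1 := by
      have : v - u - 1 = (g - 1) + h := by rw [hdefh]; ring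
      rw [this]; exact dvd_add hg1 hkey
    have d11 : (N : ℤ) ∣ v - (1 + (p:ℤ)*q) * u - 1 := by
      have : v - (1 + (p:ℤ)*q) * u - 1 = (v - u - 1) - 2 * h := by
        rw [← hh]; ring
      rw [this]; exact dvd_sub d22 (hkey.mul_left 2)
    rw [hone]
    ext i j
    fin_cases i <;> fin_cases j <;>
      simp only [Matrix.map_apply, Matrix.cons_val', Matrix.cons_val_zero, Matrix.cons_val_one,
        Matrix.head_cons, Matrix.head_fin_const, Matrix.empty_val', Matrix.cons_val_fin_one] <;>
      [skip; skip; skip; skip]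
    · show ((v - (1 + (p:ℤ)*q) * u : ℤ) : ZMod N) = 1
      rw [show (1 : ZMod N) = ((1:ℤ) : ZMod N) by simp, ZMod.intCast_eq_intCast_iff,
        Int.modEq_iff_dvd]
      rw [show (1:ℤ) - (v - (1 + (p:ℤ)*q) * u) = -(v - (1 + (p:ℤ)*q) * u - 1) by ring, dvd_neg]
      exact d11
    · show (((p:ℤ) * u : ℤ) : ZMod N) = 0
      rw [show (0 : ZMod N) = ((0:ℤ) : ZMod N) by simp, ZMod.intCast_eq_intCast_iff,
        Int.modEq_iff_dvd]
      simpa using h12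
    · show (((q:ℤ) * u : ℤ) : ZMod N) = 0
      rw [show (0 : ZMod N) = ((0:ℤ) : ZMod N) by simp, ZMod.intCast_eq_intCast_iff,
        Int.modEq_iff_dvd]
      simpa using h21
    · show ((v - u : ℤ) : ZMod N) = 1
      rw [show (1 : ZMod N) = ((1:ℤ) : ZMod N) by simp, ZMod.intCast_eq_intCast_iff,
        Int.modEq_iff_dvd]
      rw [show (1:ℤ) - (v - u) = -(v - u - 1) by ring, dvd_neg]
      exact d22
end

section
/- Let C = [[1,p],[q,1+p·q]] over Z/2^{e+1}Z, and suppose (x,y) satisfies Cⁿ·(x,y)ᵀ ≡ (x,y)ᵀ (mod 2^{e+1}) with G_n even. Then for any a, b ∈ {0,1}, C^{2n}·(x + a·2^e, y + b·2^e)ᵀ ≡ (x + a·2^e, y + b·2^e)ᵀ (mod 2^{e+1}). In particular, using C^{2n} = G_n·Cⁿ − I: C^{2n}·(a·2^e, b·2^e)ᵀ ≡ (a·2^e, b·2^e)ᵀ (mod 2^{e+1}). -/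
lemma ch2' (a b c d : ℤ) :
    !![a,b;c,d] * !![a,b;c,d] = (a+d) • !![a,b;c,d] - (a*d - b*c) • (1 : Matrix (Fin 2) (Fin 2) ℤ) := by
  ext i j
  fin_cases i <;> fin_cases j <;>
    simp only [Matrix.sub_apply, Matrix.smul_apply, smul_eq_mul, Matrix.one_apply,
      Matrix.mul_apply, Fin.sum_univ_two, Matrix.cons_val', Matrix.cons_val_zero,
      Matrix.cons_val_one, Matrix.head_cons, Matrix.empty_val', Matrix.cons_val_fin_one,
      Matrix.of_apply, Fin.zero_eta, Fin.mk_one] <;>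
    norm_num <;> ring

lemma ch2 (M : Matrix (Fin 2) (Fin 2) ℤ) :
    M * M = M.trace • M - M.det • (1 : Matrix (Fin 2) (Fin 2) ℤ) := by
  rw [Matrix.eta_fin_two M, Matrix.trace_fin_two_of, Matrix.det_fin_two_of, ch2']

lemma cat_det (p q : ℤ) : (catMatrix p q).det = 1 := by
  simp [catMatrix, Matrix.det_fin_two_of]

lemma cat_step (p q : ℤ) (n : ℕ) :
    (catMatrix p q) ^ (n + 2) = (p * q + 2) • (catMatrix p q) ^ (n + 1) - (catMatrix p q) ^ n := by
  have h2 : (catMatrix p q) * (catMatrix p q)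
      = (p * q + 2) • (catMatrix p q) - 1 := by
    rw [ch2, cat_det]
    congr 1
    · congr 1
      simp [catMatrix, Matrix.trace_fin_two]
      ring
    · rw [one_smul]
  calc (catMatrix p q) ^ (n + 2) = (catMatrix p q) ^ n * ((catMatrix p q) * (catMatrix p q)) := by
        rw [pow_add, pow_two]
    _ = (p * q + 2) • (catMatrix p q) ^ (n + 1) - (catMatrix p q) ^ n := by
        rw [h2, Matrix.mul_sub, Matrix.mul_smul, Matrix.mul_one, ← pow_succ]

lemma trace_pow (p q : ℤ) : ∀ n : ℕ, ((catMatrix p q) ^ n).trace = G (p * q + 2) n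
  | 0 => by simp [G, Matrix.trace_fin_two]
  | 1 => by simp [G, catMatrix, Matrix.trace_fin_two]; ring
  | (n + 2) => by
    rw [cat_step, G, Matrix.trace_sub, Matrix.trace_smul, trace_pow p q (n + 1),
      trace_pow p q n, smul_eq_mul]

lemma pow_two_n (p q : ℤ) (n : ℕ) :
    (catMatrix p q) ^ (2 * n) = G (p * q + 2) n • (catMatrix p q) ^ n - 1 := by
  have h := ch2 ((catMatrix p q) ^ n)
  have hd : ((catMatrix p q) ^ n).det = 1 := by rw [Matrix.det_pow, cat_det, one_pow]
  rw [two_mul, pow_add, h, trace_pow, hd, one_smul]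

lemma mulVec_modEq (M : Matrix (Fin 2) (Fin 2) ℤ) (u v : Fin 2 → ℤ) (m : ℤ)
    (h : ∀ i, u i ≡ v i [ZMOD m]) : ∀ i, M.mulVec u i ≡ M.mulVec v i [ZMOD m] := by
  intro i
  simp only [Matrix.mulVec, dotProduct, Fin.sum_univ_two]
  exact ((h 0).mul_left _).add ((h 1).mul_left _)

theorem cycle_lift_double (p q : ℤ) (e n : ℕ) (he : 1 ≤ e)
    (heven : Even (G (p * q + 2) n)) (x y : ℤ)
    (hfix : ∀ i, ((catMatrix p q) ^ n).mulVec ![x, y] i ≡ ![x, y] i [ZMOD 2 ^ (e + 1)]) :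
    (∀ a b : ℤ, (a = 0 ∨ a = 1) → (b = 0 ∨ b = 1) →
      ∀ i, ((catMatrix p q) ^ (2 * n)).mulVec ![x + a * 2 ^ e, y + b * 2 ^ e] i ≡
        ![x + a * 2 ^ e, y + b * 2 ^ e] i [ZMOD 2 ^ (e + 1)]) ∧
    (∀ a b : ℤ, (a = 0 ∨ a = 1) → (b = 0 ∨ b = 1) →
      ∀ i, ((catMatrix p q) ^ (2 * n)).mulVec ![a * 2 ^ e, b * 2 ^ e] i ≡
        ![a * 2 ^ e, b * 2 ^ e] i [ZMOD 2 ^ (e + 1)]) := by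
  obtain ⟨k, hk⟩ := heven
  have key : ∀ a b : ℤ, ∀ i, ((catMatrix p q) ^ (2 * n)).mulVec ![a * 2 ^ e, b * 2 ^ e] i ≡
      ![a * 2 ^ e, b * 2 ^ e] i [ZMOD 2 ^ (e + 1)] := by
    intro a b i
    have hvec : (![a * 2 ^ e, b * 2 ^ e] : Fin 2 → ℤ) = (2 ^ e : ℤ) • ![a, b] := by
      funext j; fin_cases j <;> simp [mul_comm]
    rw [pow_two_n, Matrix.sub_mulVec, Matrix.smul_mulVec, Matrix.one_mulVec, hvec,
      Matrix.mulVec_smul]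
    simp only [Pi.sub_apply, Pi.smul_apply, smul_eq_mul]
    set t := ((catMatrix p q) ^ n).mulVec ![a, b] i with ht
    set c := (![a, b] : Fin 2 → ℤ) i with hc
    rw [Int.modEq_iff_dvd]
    refine ⟨c - k * t, ?_⟩
    rw [hk]
    ring
  refine ⟨?_, fun a b _ _ => key a b⟩
  have fix2 : ∀ i, ((catMatrix p q) ^ (2 * n)).mulVec ![x, y] i ≡ ![x, y] i [ZMOD 2 ^ (e + 1)] := by
    intro i
    have h2 : ((catMatrix p q) ^ (2 * n)).mulVec ![x, y]
        = ((catMatrix p q) ^ n).mulVec (((catMatrix p q) ^ n).mulVec ![x, y]) := by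
      rw [Matrix.mulVec_mulVec, ← pow_add, two_mul]
    rw [h2]
    exact (mulVec_modEq _ _ _ _ hfix i).trans (hfix i)
  intro a b _ _ i
  have hsplit : (![x + a * 2 ^ e, y + b * 2 ^ e] : Fin 2 → ℤ)
      = ![x, y] + ![a * 2 ^ e, b * 2 ^ e] := by
    funext j; fin_cases j <;> simp
  rw [hsplit, Matrix.mulVec_add]
  exact (fix2 i).add (key a b i)
end
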